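/- Let K be a finite field with a subfield F of cardinality q and [K : F] = m. Let R and K' be integers with 1 ≤ R ≤ K' and R ≤ m, and let z_1, …, z_R ∈ K be linearly independent over F. Let f = (f_1, …, f_{K'−R}) be an arbitrary random vector with values in K^{K'−R}, and let r = (r_1, …, r_R) be uniformly distributed on K^R and independent of f. Define the random vector e = (e_1, …, e_R) by e_j = ∑_{i=1}^{R} r_i · z_j^{q^{i−1}} + ∑_{i=R+1}^{K'} f_{i−R} · z_j^{q^{i−1}} (the evaluations of the linearized polynomial with coefficient vector (r, f) at the points z_1, …, z_R). Then e is uniformly distributed on K^R and is independent of f; moreover, for every fixed value of f, the map r ↦ e is a bijection of K^R, so r is uniquely determined by the pair (f, e). -/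

import Mathlib

/-!
The map `r ↦ e` is, for each value of `f`, the affine map `r ↦ r ᵥ* M + b(f)` where `M` is the
Moore matrix `(z_j ^ q ^ i)`. `M` is invertible: a vector `a` with `a ᵥ* M = 0` gives the
linearized polynomial `∑ a_i X ^ q ^ i`, whose evaluation is `F`-linear because `x ↦ x ^ q` is,
so it vanishes on the `F`-span of the `z_j`. That span has `q ^ R` elements, more than the degree
`< q ^ R` allows unless `a = 0`. Uniformity of `e` and independence from `f` then follow from the
one-time pad: mixing a uniform key independent of `f` bijectively (for each value of `f`) yields a
uniform variable independent of `f`.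
-/

def IsPMF {Ω : Type} [Fintype Ω] (p : Ω → ℝ) : Prop :=
  (∀ ω, 0 ≤ p ω) ∧ ∑ ω, p ω = 1

noncomputable def prEq {Ω : Type} [Fintype Ω] (p : Ω → ℝ) {S : Type} [DecidableEq S]
    (X : Ω → S) (x : S) : ℝ :=
  ∑ ω, if X ω = x then p ω else 0

/-- Terms with probability `0` vanish since `Real.logb b 0 = 0`. -/
noncomputable def entH {Ω : Type} [Fintype Ω] (b : ℝ) (p : Ω → ℝ) {S : Type}
    [Fintype S] [DecidableEq S] (X : Ω → S) : ℝ :=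
  -∑ x, prEq p X x * Real.logb b (prEq p X x)

noncomputable def condH {Ω : Type} [Fintype Ω] (b : ℝ) (p : Ω → ℝ) {S T : Type}
    [Fintype S] [DecidableEq S] [Fintype T] [DecidableEq T]
    (X : Ω → S) (Y : Ω → T) : ℝ :=
  entH b p (fun ω => (X ω, Y ω)) - entH b p Y

noncomputable def mutI {Ω : Type} [Fintype Ω] (b : ℝ) (p : Ω → ℝ) {S T : Type}
    [Fintype S] [DecidableEq S] [Fintype T] [DecidableEq T]
    (X : Ω → S) (Y : Ω → T) : ℝ :=
  entH b p X + entH b p Y - entH b p (fun ω => (X ω, Y ω))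

def IndepRV {Ω : Type} [Fintype Ω] (p : Ω → ℝ) {S T : Type} [DecidableEq S] [DecidableEq T]
    (X : Ω → S) (Y : Ω → T) : Prop :=
  ∀ x y, prEq p (fun ω => (X ω, Y ω)) (x, y) = prEq p X x * prEq p Y y

section Linearized

open Polynomial

variable {K : Type*} [Field K] {n : ℕ}

noncomputable def linearizedPoly (q : ℕ) (a : Fin n → K) : K[X] :=
  ∑ i, C (a i) * X ^ q ^ (i : ℕ)

lemma eval_linearizedPoly (q : ℕ) (a : Fin n → K) (x : K) :
    (linearizedPoly q a).eval x = ∑ i, a i * x ^ q ^ (i : ℕ) := by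
  simp [linearizedPoly, eval_finsetSum]

lemma coeff_linearizedPoly_pow {q : ℕ} (hq : 1 < q) (a : Fin n → K) (i : Fin n) :
    (linearizedPoly q a).coeff (q ^ (i : ℕ)) = a i := by
  rw [linearizedPoly, finsetSum_coeff, Finset.sum_eq_single i]
  · simp
  · intro j _ hji
    rw [coeff_C_mul_X_pow, if_neg (fun h => hji (Fin.ext (Nat.pow_right_injective hq h).symm))]
  · simp

lemma linearizedPoly_ne_zero {q : ℕ} (hq : 1 < q) {a : Fin n → K} (ha : a ≠ 0) :
    linearizedPoly q a ≠ 0 := by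
  obtain ⟨i, hi⟩ := Function.ne_iff.mp ha
  exact fun h => hi (by rw [← coeff_linearizedPoly_pow hq a i, h, coeff_zero, Pi.zero_apply])

lemma natDegree_linearizedPoly_lt {q : ℕ} (hq : 1 < q) (a : Fin n → K) :
    (linearizedPoly q a).natDegree < q ^ n := by
  cases n with
  | zero => simp [linearizedPoly]
  | succ k =>
    refine (natDegree_sum_le_of_forall_le _ _ fun i _ => ?_).trans_lt
      (Nat.pow_lt_pow_right hq k.lt_succ_self)
    exact (natDegree_C_mul_X_pow_le _ _).trans
      (Nat.pow_le_pow_right (by omega) (Nat.lt_succ_iff.mp i.2))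

variable (F : Type*) [Field F] [Fintype F] [Algebra F K]

/-- Evaluation of `linearizedPoly (#F) a`, which is `F`-linear since `x ↦ x ^ #F` is the
Frobenius `F`-algebra endomorphism of `K`. -/
noncomputable def linearizedEvalₗ (a : Fin n → K) : K →ₗ[F] K :=
  ∑ i, a i • ((FiniteField.frobeniusAlgHom F K) ^ (i : ℕ)).toLinearMap

lemma linearizedEvalₗ_apply (a : Fin n → K) (x : K) :
    linearizedEvalₗ F a x = (linearizedPoly (Fintype.card F) a).eval x := by
  simp [linearizedEvalₗ, eval_linearizedPoly, AlgHom.coe_pow, FiniteField.coe_frobeniusAlgHom,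
    pow_iterate]

theorem linearizedPoly_eq_zero_of_linearIndependent {z : Fin n → K} (hz : LinearIndependent F z)
    {a : Fin n → K} (ha : ∀ j, (linearizedPoly (Fintype.card F) a).eval (z j) = 0) : a = 0 := by
  by_contra ha0
  have hq : 1 < Fintype.card F := Fintype.one_lt_card
  set V := Submodule.span F (Set.range z)
  have hV : V ≤ LinearMap.ker (linearizedEvalₗ F a) :=
    Submodule.span_le.mpr <| Set.range_subset_iff.mpr fun j => by
      simpa [linearizedEvalₗ_apply] using ha j
  have : Module.Finite F V := FiniteDimensional.span_of_finite F (Set.finite_range z)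
  have : Finite V := Module.finite_of_finite F
  have hV_fin : (V : Set K).Finite := Set.toFinite _
  have hcard : hV_fin.toFinset.card = Fintype.card F ^ n := by
    rw [← Set.ncard_eq_toFinset_card _ hV_fin, ← Nat.card_coe_set_eq, SetLike.coe_sort_coe,
      Module.natCard_eq_pow_finrank (K := F), Nat.card_eq_fintype_card, finrank_span_eq_card hz,
      Fintype.card_fin]
  have hroots : hV_fin.toFinset.val ⊆ (linearizedPoly (Fintype.card F) a).roots := fun x hx => by
    rw [mem_roots (linearizedPoly_ne_zero hq ha0), IsRoot, ← linearizedEvalₗ_apply]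
    exact hV (by simpa using hx)
  have := card_le_degree_of_subset_roots hroots
  rw [hcard] at this
  exact (natDegree_linearizedPoly_lt hq a).not_ge this

end Linearized

section Moore

open Matrix

variable {K : Type*} [Field K] {n : ℕ}

def mooreMatrix (q : ℕ) (z : Fin n → K) : Matrix (Fin n) (Fin n) K :=
  Matrix.of fun i j => z j ^ q ^ (i : ℕ)

lemma vecMul_mooreMatrix_apply (q : ℕ) (z a : Fin n → K) (j : Fin n) :
    (a ᵥ* mooreMatrix q z) j = ∑ i, a i * z j ^ q ^ (i : ℕ) := rfl

theorem isUnit_mooreMatrix {F : Type*} [Field F] [Fintype F] [Algebra F K] {z : Fin n → K}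
    (hz : LinearIndependent F z) : IsUnit (mooreMatrix (Fintype.card F) z) := by
  rw [← vecMul_injective_iff_isUnit, ← coe_vecMulLinear, injective_iff_map_eq_zero]
  intro a ha
  refine linearizedPoly_eq_zero_of_linearIndependent F hz fun j => ?_
  rw [eval_linearizedPoly, ← vecMul_mooreMatrix_apply]
  exact congrFun ha j

end Moore

section Probability

variable {Ω S T : Type} [Fintype Ω] [DecidableEq S] [DecidableEq T] {p : Ω → ℝ}

lemma prEq_congr {X : Ω → S} {Y : Ω → T} {x : S} {y : T} (h : ∀ ω, X ω = x ↔ Y ω = y) :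
    prEq p X x = prEq p Y y :=
  Finset.sum_congr rfl fun ω _ => if_congr (h ω) rfl rfl

lemma sum_prEq [Fintype S] (X : Ω → S) : ∑ x, prEq p X x = ∑ ω, p ω := by
  simp only [prEq]
  rw [Finset.sum_comm]
  simp

lemma prEq_eq_sum_prEq_prod [Fintype T] (X : Ω → S) (Y : Ω → T) (x : S) :
    prEq p X x = ∑ y, prEq p (fun ω => (X ω, Y ω)) (x, y) := by
  simp only [prEq]
  rw [Finset.sum_comm]
  refine Finset.sum_congr rfl fun ω _ => ?_
  simp [Prod.ext_iff, ite_and]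

variable {X : Ω → S} {Y : Ω → T} {g : T → S → S} {c : ℝ}

/-- The one-time pad: mixing a uniform key `X` into the message `Y` hides it. -/
lemma prEq_prod_of_bijective (hg : ∀ t, Function.Bijective (g t)) (hX : ∀ x, prEq p X x = c)
    (hXY : IndepRV p X Y) (v : S) (t : T) :
    prEq p (fun ω => (g (Y ω) (X ω), Y ω)) (v, t) = c * prEq p Y t := by
  obtain ⟨x, rfl⟩ := (hg t).surjective v
  calc prEq p (fun ω => (g (Y ω) (X ω), Y ω)) (g t x, t)
      = prEq p (fun ω => (X ω, Y ω)) (x, t) := prEq_congr fun ω => by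
        simp only [Prod.mk.injEq]
        exact and_congr_left fun hY => by rw [hY]; exact (hg t).injective.eq_iff
    _ = c * prEq p Y t := by rw [hXY, hX]

lemma prEq_of_bijective [Fintype T] (hp : ∑ ω, p ω = 1) (hg : ∀ t, Function.Bijective (g t))
    (hX : ∀ x, prEq p X x = c) (hXY : IndepRV p X Y) (v : S) :
    prEq p (fun ω => g (Y ω) (X ω)) v = c := by
  rw [prEq_eq_sum_prEq_prod _ Y]
  simp only [prEq_prod_of_bijective hg hX hXY]
  rw [← Finset.mul_sum, sum_prEq, hp, mul_one]

lemma indepRV_of_bijective [Fintype T] (hp : ∑ ω, p ω = 1)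
    (hg : ∀ t, Function.Bijective (g t))
    (hX : ∀ x, prEq p X x = c) (hXY : IndepRV p X Y) :
    IndepRV p (fun ω => g (Y ω) (X ω)) Y := fun v t => by
  rw [prEq_prod_of_bijective hg hX hXY, prEq_of_bijective hp hg hX hXY]

end Probability

theorem gabidulin_precoding_secrecy_general
    {F K : Type} [Field F] [Field K] [Algebra F K] [Fintype F] [Fintype K]
    [DecidableEq K]
    (q : ℕ) (hq : Fintype.card F = q)
    (R K' : ℕ)
    (z : Fin R → K) (hz : LinearIndependent F z)
    {Ω : Type} [Fintype Ω] (p : Ω → ℝ) (hp : IsPMF p)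
    (f : Ω → (Fin (K' - R) → K)) (r : Ω → (Fin R → K))
    -- `r` is uniformly distributed on `K^R`
    (hrunif : ∀ v, prEq p r v = 1 / (Fintype.card K : ℝ) ^ R)
    -- `r` is independent of `f`
    (hindep : IndepRV p r f)
    -- the evaluation map: `E fv rv j` evaluates the linearized polynomial with
    -- coefficients `(rv, fv)` at the point `z j`
    (E : (Fin (K' - R) → K) → (Fin R → K) → (Fin R → K))
    (hE : ∀ fv rv j, E fv rv j =
      (∑ i : Fin R, rv i * z j ^ q ^ (i : ℕ)) +
      ∑ i : Fin (K' - R), fv i * z j ^ q ^ (R + (i : ℕ)))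
    (e : Ω → (Fin R → K)) (he : ∀ ω, e ω = E (f ω) (r ω)) :
    (∀ v, prEq p e v = 1 / (Fintype.card K : ℝ) ^ R) ∧
    IndepRV p e f ∧
    (∀ fv, Function.Bijective (fun rv => E fv rv)) := by
  subst hq
  have hM := isUnit_mooreMatrix hz
  have hbij (fv) : Function.Bijective (E fv) := by
    let b : Fin R → K := fun j => ∑ i : Fin (K' - R), fv i * z j ^ Fintype.card F ^ (R + (i : ℕ))
    have hE_fv : E fv = (· + b) ∘ (Matrix.vecMul · (mooreMatrix (Fintype.card F) z)) := by
      ext rv j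
      simp [hE, b, vecMul_mooreMatrix_apply]
    rw [hE_fv]
    exact (Equiv.addRight _).bijective.comp
      ⟨Matrix.vecMul_injective_iff_isUnit.mpr hM, Matrix.vecMul_surjective_iff_isUnit.mpr hM⟩
  obtain rfl : e = fun ω => E (f ω) (r ω) := funext he
  exact ⟨prEq_of_bijective hp.2 hbij hrunif hindep, indepRV_of_bijective hp.2 hbij hrunif hindep,
    hbij⟩

/-- **Secrecy of Gabidulin-code pre-coding.**  `K` is a finite field with subfield `F`
of cardinality `q` and `[K : F] = m` (the subfield is modelled by the field extension
`Algebra F K`).  The linearized polynomial with coefficient vector `(r, f)` — the first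
`R` coefficients uniformly random and independent of the data `f` — is evaluated at `R`
points `z_1, …, z_R ∈ K` that are linearly independent over `F`.  Then the observation
`e` is uniform on `K^R` and independent of `f`, and for every fixed value of `f` the map
`r ↦ e` is a bijection of `K^R` (so `r` is determined by `(f, e)`). -/
theorem gabidulin_precoding_secrecy
    {F K : Type} [Field F] [Field K] [Algebra F K] [Fintype F] [Fintype K]
    [DecidableEq K]
    (q m : ℕ) (hq : Fintype.card F = q) (hm : Module.finrank F K = m)
    (R K' : ℕ) (hR1 : 1 ≤ R) (hRK : R ≤ K') (hRm : R ≤ m)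
    (z : Fin R → K) (hz : LinearIndependent F z)
    {Ω : Type} [Fintype Ω] (p : Ω → ℝ) (hp : IsPMF p)
    (f : Ω → (Fin (K' - R) → K)) (r : Ω → (Fin R → K))
    -- `r` is uniformly distributed on `K^R`
    (hrunif : ∀ v, prEq p r v = 1 / (Fintype.card K : ℝ) ^ R)
    -- `r` is independent of `f`
    (hindep : IndepRV p r f)
    -- the evaluation map: `E fv rv j` evaluates the linearized polynomial with
    -- coefficients `(rv, fv)` at the point `z j`
    (E : (Fin (K' - R) → K) → (Fin R → K) → (Fin R → K))
    (hE : ∀ fv rv j, E fv rv j =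
      (∑ i : Fin R, rv i * z j ^ q ^ (i : ℕ)) +
      ∑ i : Fin (K' - R), fv i * z j ^ q ^ (R + (i : ℕ)))
    (e : Ω → (Fin R → K)) (he : ∀ ω, e ω = E (f ω) (r ω)) :
    (∀ v, prEq p e v = 1 / (Fintype.card K : ℝ) ^ R) ∧
    IndepRV p e f ∧
    (∀ fv, Function.Bijective (fun rv => E fv rv)) :=
  gabidulin_precoding_secrecy_general q hq R K' z hz p hp f r hrunif hindep E hE e he
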